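/- Fix c0 > 0, 0 < d0 ≤ α0 ≤ d1, x0 = t0^{1/d0} where t0 minimizes h(t) = (c0·t − 1)·ln t − 1 over [1, ∞), and v0 = h(x0^{d1}). Let h* be the restriction of h to [t0, ∞), with generalized inverse (h*)^←. Then for any v with v0 ≤ v < u < ∞ and any α ∈ [d0, d1], ∫_{x0}^∞ [h*(y^α)]ᵥᵘ dF_W*(y; α0) = v + ∫ᵥᵘ exp(−c0·((h*)^←(t))^{α0/α}) dt, where F_W*(x; α0) = 1 − exp(−c0·x^{α0}) for x > x0 and F_W*(x; α0) = 0 for x ≤ x0 is the distribution of the censored variable X* = max(X, x0). -/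

import Mathlib

open Real Set MeasureTheory

noncomputable def h (c0 t : ℝ) : ℝ := (c0 * t - 1) * Real.log t - 1

/-- Generalized inverse `(h*)^←(y) = inf {t ≥ t0 : h t ≥ y}` of the restriction of
`h` to `[t0, ∞)`. -/
noncomputable def hstarInv (c0 t0 y : ℝ) : ℝ := sInf {t : ℝ | t0 ≤ t ∧ y ≤ h c0 t}

/-- Truncation `[z]ᵥᵘ = min (max z v) u`. -/
noncomputable def trunc (v u z : ℝ) : ℝ := min (max z v) u

/-!
`h` is strictly convex on `[1, ∞)`, hence strictly increasing beyond its minimiser `t0`; being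
continuous and unbounded there, `h*` is a bijection `[t0, ∞) → [h t0, ∞)` and `(h*)^←` is its
inverse. Since `Z = [h*(X*^α)]ᵥᵘ` takes values in `[v, u]`, the layer-cake formula gives
`E Z = v + ∫ᵥᵘ P(Z > t) dt`. For `v < t < u` the bound `h*(x0^α) ≤ v` makes `Z > t` equivalent
to `X* > ((h*)^←(t))^(1/α)`, a point of the Weibull part of the law of `X*`, whose tail is
`exp(-c0 ((h*)^←(t))^(α0/α))`.
-/

open Filter Topology

theorem StrictConvexOn.strictMonoOn_of_isMinOn {𝕜 : Type*} [Field 𝕜] [LinearOrder 𝕜]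
    [IsStrictOrderedRing 𝕜] {s : Set 𝕜} {f : 𝕜 → 𝕜} {a : 𝕜} (hf : StrictConvexOn 𝕜 s f)
    (ha : a ∈ s) (hmin : IsMinOn f s a) : StrictMonoOn f (s ∩ Ici a) := by
  have hs := hf.1.ordConnected
  have lt_of_above_min : ∀ ⦃x y⦄, a < x → x < y → y ∈ s → f x < f y := by
    intro x y hax hxy hy
    have hslope := hf.slope_strict_mono_adjacent ha hy hax hxy
    have hfx : f a ≤ f x := hmin (hs.out ha hy ⟨hax.le, hxy.le⟩)
    have : 0 < (f y - f x) / (y - x) :=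
      (div_nonneg (sub_nonneg.2 hfx) (sub_nonneg.2 hax.le)).trans_lt hslope
    linarith [(div_pos_iff_of_pos_right (sub_pos.2 hxy)).1 this]
  rintro x ⟨-, hax⟩ y ⟨hy, -⟩ hxy
  rcases (mem_Ici.1 hax).lt_or_eq with hax | rfl
  · exact lt_of_above_min hax hxy hy
  · have hm : a < (a + y) / 2 := by linarith
    have hmy : (a + y) / 2 < y := by linarith
    exact (hmin (hs.out ha hy ⟨hm.le, hmy.le⟩)).trans_lt (lt_of_above_min hm hmy hy)

section h

variable {c0 : ℝ}

theorem h_strictConvexOn (hc0 : 0 < c0) : StrictConvexOn ℝ (Ici 1) (h c0) := by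
  have hxlogx := (convexOn_mul_log.subset (Ici_subset_Ici.2 zero_le_one)
    (convex_Ici 1)).smul hc0.le
  have hneglog := (strictConcaveOn_log_Ioi.subset (Ici_subset_Ioi.2 zero_lt_one)
    (convex_Ici 1)).neg
  have hsplit : h c0 = (fun t => c0 • (t * log t)) + -log + fun _ => -1 := by
    funext t
    simp only [h, Pi.add_apply, Pi.neg_apply, smul_eq_mul]
    ring
  rw [hsplit]
  exact (hxlogx.add_strictConvexOn hneglog).add_convexOn (convexOn_const _ (convex_Ici 1))

theorem h_strictMonoOn {t0 : ℝ} (hc0 : 0 < c0) (ht0 : 1 ≤ t0)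
    (hmin : ∀ t ∈ Ici (1:ℝ), h c0 t0 ≤ h c0 t) : StrictMonoOn (h c0) (Ici t0) := by
  simpa [ht0] using (h_strictConvexOn hc0).strictMonoOn_of_isMinOn (mem_Ici.2 ht0) hmin

theorem tendsto_h_atTop (hc0 : 0 < c0) : Tendsto (h c0) atTop atTop := by
  have hlin : Tendsto (fun t => c0 * t - 1) atTop atTop :=
    tendsto_atTop_add_const_right _ _ (tendsto_id.const_mul_atTop hc0)
  exact tendsto_atTop_add_const_right _ _ (hlin.atTop_mul_atTop₀ tendsto_log_atTop)

theorem h_continuousOn {t0 : ℝ} (ht0 : 0 < t0) : ContinuousOn (h c0) (Ici t0) := by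
  unfold h
  exact ((continuousOn_const.mul continuousOn_id).sub continuousOn_const).mul
    (continuousOn_log.mono fun t ht => (ht0.trans_le ht).ne') |>.sub continuousOn_const

theorem h_surjOn {t0 : ℝ} (hc0 : 0 < c0) (ht0 : 0 < t0) :
    SurjOn (h c0) (Ici t0) (Ici (h c0 t0)) :=
  intermediate_value_Ici (h_continuousOn ht0) (tendsto_h_atTop hc0)

theorem hstarInv_h {t0 s : ℝ} (hmono : StrictMonoOn (h c0) (Ici t0)) (hs : t0 ≤ s) :
    hstarInv c0 t0 (h c0 s) = s := by
  have : {t | t0 ≤ t ∧ h c0 s ≤ h c0 t} = Ici s := by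
    ext t
    constructor
    · rintro ⟨ht, hst⟩
      exact (hmono.le_iff_le hs ht).1 hst
    · intro hst
      exact ⟨hs.trans hst, (hmono.le_iff_le hs (hs.trans hst)).2 hst⟩
  rw [hstarInv, this, csInf_Ici]

end h

theorem integral_eq_add_intervalIntegral_measureReal_lt {Ω : Type*} [MeasurableSpace Ω]
    {μ : Measure Ω} [IsProbabilityMeasure μ] {g : Ω → ℝ} {v u : ℝ}
    (hg : AEStronglyMeasurable g μ) (hv : ∀ x, v ≤ g x) (hu : ∀ x, g x ≤ u) :
    ∫ x, g x ∂μ = v + ∫ t in v..u, μ.real {x | t < g x} := by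
  obtain ⟨x⟩ := nonempty_of_isProbabilityMeasure μ
  have hvu : v ≤ u := (hv x).trans (hu x)
  have hgint : Integrable g μ := .of_bound hg (|v| + |u|) (ae_of_all _ fun x => abs_le.2
    ⟨by linarith [hv x, neg_abs_le v, abs_nonneg u],
      by linarith [hu x, le_abs_self u, abs_nonneg v]⟩)
  have hint : Integrable (fun x => g x - v) μ := hgint.sub (integrable_const v)
  have hlayer := hint.integral_eq_integral_meas_lt (ae_of_all _ fun x => sub_nonneg.2 (hv x))
  have hempty : ∀ t ∈ Ioi (0:ℝ) \ Ioc 0 (u - v), μ.real {x | t < g x - v} = 0 := by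
    rintro t ⟨htpos, htu⟩
    have hut : u - v < t := by simp_all
    have : {x | t < g x - v} = ∅ :=
      eq_empty_of_forall_notMem fun x (hx : t < g x - v) => by linarith [hu x]
    simp [this]
  rw [setIntegral_eq_of_subset_of_ae_sdiff_eq_zero nullMeasurableSet_Ioi Ioc_subset_Ioi_self
    (ae_of_all _ hempty), ← intervalIntegral.integral_of_le (sub_nonneg.2 hvu)] at hlayer
  have hshift := intervalIntegral.integral_comp_add_right (fun t => μ.real {x | t < g x}) v
    (a := 0) (b := u - v)
  simp only [zero_add, sub_add_cancel, ← lt_sub_iff_add_lt] at hshift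
  rw [← hshift, ← hlayer, integral_sub hgint (integrable_const v)]
  simp

theorem measure_Iio_eq_zero_of_forall_lt {μ : Measure ℝ} {a : ℝ}
    (h : ∀ x < a, μ (Iic x) = 0) : μ (Iio a) = 0 := by
  have hlt : ∀ n : ℕ, a - 1 / ((n : ℝ) + 1) < a := fun n => by
    have : (0 : ℝ) < 1 / ((n : ℝ) + 1) := by positivity
    linarith
  have hlim : Tendsto (fun n : ℕ => a - 1 / ((n : ℝ) + 1)) atTop (𝓝 a) := by
    simpa using (tendsto_const_nhds (x := a)).sub tendsto_one_div_add_atTop_nhds_zero_nat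
  rw [← iUnion_Iic_eq_Iio_of_lt_of_tendsto hlt hlim]
  exact measure_iUnion_null fun n => h _ (hlt n)

theorem measureReal_Ioi_of_measure_Iic {μ : Measure ℝ} [IsProbabilityMeasure μ] {r q : ℝ}
    (hq : q ≤ 1) (h : μ (Iic r) = ENNReal.ofReal (1 - q)) : μ.real (Ioi r) = q := by
  rw [← compl_Iic, probReal_compl_eq_one_sub measurableSet_Iic, measureReal_def, h,
    ENNReal.toReal_ofReal (sub_nonneg.2 hq), sub_sub_cancel]

theorem self_le_rpow_one_div_rpow {t d e : ℝ} (ht : 1 ≤ t) (hd : 0 < d) (hde : d ≤ e) :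
    t ≤ (t ^ (1 / d)) ^ e := by
  rw [← rpow_mul (zero_le_one.trans ht)]
  conv_lhs => rw [← rpow_one t]
  exact rpow_le_rpow_of_exponent_le ht (by rwa [one_div_mul_eq_div, one_le_div hd])

section trunc

variable {v u c z : ℝ}

theorem le_trunc (hvu : v ≤ u) : v ≤ trunc v u z := le_min (le_max_right _ _) hvu

theorem trunc_le : trunc v u z ≤ u := min_le_right _ _

theorem lt_trunc_iff (hvc : v ≤ c) (hcu : c < u) : c < trunc v u z ↔ c < z := by
  simp only [trunc, lt_min_iff, lt_max_iff, hcu, and_true, hvc.not_gt, or_false]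

end trunc

section Censored

variable {c0 t0 x0 α v u s : ℝ}

theorem setOf_lt_trunc_h_rpow_inter_Ici (hmono : StrictMonoOn (h c0) (Ici t0)) (hx0 : 0 ≤ x0)
    (hα : 0 < α) (ht0x0 : t0 ≤ x0 ^ α) (hx0v : h c0 (x0 ^ α) ≤ v) (hs : t0 ≤ s)
    (hvs : v ≤ h c0 s) (hsu : h c0 s < u) :
    {y | h c0 s < trunc v u (h c0 (y ^ α))} ∩ Ici x0 = Ioi (s ^ α⁻¹) := by
  have hx0s : x0 ^ α ≤ s := (hmono.le_iff_le ht0x0 hs).1 (hx0v.trans hvs)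
  have hs0 : 0 ≤ s := (rpow_nonneg hx0 α).trans hx0s
  have hx0r : x0 ≤ s ^ α⁻¹ := (le_rpow_inv_iff_of_pos hx0 hs0 hα).2 hx0s
  ext y
  simp only [mem_inter_iff, mem_ofPred_eq, mem_Ici, mem_Ioi, lt_trunc_iff hvs hsu]
  constructor
  · rintro ⟨hlt, hy⟩
    have hyα : t0 ≤ y ^ α := ht0x0.trans (rpow_le_rpow hx0 hy hα.le)
    exact (rpow_inv_lt_iff_of_pos hs0 (hx0.trans hy) hα).2 ((hmono.lt_iff_lt hs hyα).1 hlt)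
  · intro hy
    have hsy : s < y ^ α := (rpow_inv_lt_iff_of_pos hs0 (hx0.trans (hx0r.trans hy.le)) hα).1 hy
    exact ⟨hmono hs (hs.trans hsy.le) hsy, hx0r.trans hy.le⟩

theorem measureReal_setOf_lt_trunc_h_rpow {α0 : ℝ} {μ : Measure ℝ} [IsProbabilityMeasure μ]
    (hcdf : ∀ x ≥ x0, μ (Iic x) = ENNReal.ofReal (1 - Real.exp (-c0 * x ^ α0)))
    (hcdf0 : ∀ x < x0, μ (Iic x) = 0) (hc0 : 0 ≤ c0) (hmono : StrictMonoOn (h c0) (Ici t0))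
    (hx0 : 0 ≤ x0) (hα : 0 < α) (ht0x0 : t0 ≤ x0 ^ α) (hx0v : h c0 (x0 ^ α) ≤ v) (hs : t0 ≤ s)
    (hvs : v ≤ h c0 s) (hsu : h c0 s < u) :
    μ.real {y | h c0 s < trunc v u (h c0 (y ^ α))} = Real.exp (-c0 * s ^ (α0 / α)) := by
  have hset := setOf_lt_trunc_h_rpow_inter_Ici hmono hx0 hα ht0x0 hx0v hs hvs hsu
  have hs0 : 0 ≤ s := (rpow_nonneg hx0 α).trans ((hmono.le_iff_le ht0x0 hs).1 (hx0v.trans hvs))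
  have hnull : μ (Ici x0)ᶜ = 0 := by
    rw [compl_Ici]
    exact measure_Iio_eq_zero_of_forall_lt hcdf0
  have hx0r : x0 ≤ s ^ α⁻¹ := Ioi_subset_Ici_iff.1 (hset ▸ inter_subset_right)
  have htail : Real.exp (-c0 * (s ^ α⁻¹) ^ α0) ≤ 1 :=
    exp_le_one_iff.2 (by nlinarith [rpow_nonneg (hx0.trans hx0r) α0])
  rw [measureReal_def, ← measure_inter_conull hnull, hset, ← measureReal_def,
    measureReal_Ioi_of_measure_Iic htail (hcdf _ hx0r), ← rpow_mul hs0, inv_mul_eq_div]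

end Censored

theorem stmt13_general (c0 d0 d1 α0 α v u t0 : ℝ) (hc0 : 0 < c0) (hd0 : 0 < d0) (hdd : d0 ≤ d1)
    (hα : α ∈ Icc d0 d1)
    (ht0 : t0 ∈ Ici (1:ℝ)) (hmin : ∀ t ∈ Ici (1:ℝ), h c0 t0 ≤ h c0 t)
    (hv : h c0 ((t0 ^ (1 / d0)) ^ d1) ≤ v) (hvu : v < u)
    (μ : Measure ℝ) [IsProbabilityMeasure μ]
    (hcdf : ∀ x ≥ t0 ^ (1 / d0), μ (Iic x) = ENNReal.ofReal (1 - Real.exp (-c0 * x ^ α0)))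
    (hcdf0 : ∀ x < t0 ^ (1 / d0), μ (Iic x) = 0) :
    ∫ y, trunc v u (h c0 (y ^ α)) ∂μ
      = v + ∫ t in v..u, Real.exp (-c0 * (hstarInv c0 t0 t) ^ (α0 / α)) := by
  have hmono := h_strictMonoOn hc0 ht0 hmin
  have hx0 : 1 ≤ t0 ^ (1 / d0) := one_le_rpow ht0 (by positivity)
  have ht0x0 : t0 ≤ (t0 ^ (1 / d0)) ^ α := self_le_rpow_one_div_rpow ht0 hd0 hα.1
  have hx0v : h c0 ((t0 ^ (1 / d0)) ^ α) ≤ v :=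
    ((hmono.le_iff_le ht0x0 (self_le_rpow_one_div_rpow ht0 hd0 hdd)).2
      (rpow_le_rpow_of_exponent_le hx0 hα.2)).trans hv
  rw [integral_eq_add_intervalIntegral_measureReal_lt (by unfold trunc h; fun_prop)
    (fun _ => le_trunc hvu.le) (fun _ => trunc_le)]
  congr 1
  refine intervalIntegral.integral_congr_Ioo_of_le hvu.le fun t ht => ?_
  obtain ⟨s, hs, rfl⟩ := h_surjOn hc0 (zero_lt_one.trans_le ht0)
    ((hmono.monotoneOn self_mem_Ici ht0x0 ht0x0).trans (hx0v.trans ht.1.le))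
  rw [hstarInv_h hmono hs]
  exact measureReal_setOf_lt_trunc_h_rpow hcdf hcdf0 hc0.le hmono (zero_le_one.trans hx0)
    (hd0.trans_le hα.1) ht0x0 hx0v hs ht.1.le ht.2

/-- Change-of-variables identity for the censored Weibull model: with
`t0 = argmin_{t ≥ 1} h t`, `x0 = t0^(1/d0)`, `v0 = h(x0^d1) ≤ v < u`, `α ∈ [d0, d1]`,
and `F_W*` the law of `max(X, x0)` for `X` Weibull`(c0, α0)`,
`∫_{x0}^∞ [h*(y^α)]ᵥᵘ dF_W*(y; α0) = v + ∫ᵥᵘ exp(-c0 ((h*)^←(t))^(α0/α)) dt`. -/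
theorem stmt13 (c0 d0 d1 α0 α v u t0 : ℝ) (hc0 : 0 < c0) (hd0 : 0 < d0) (hdd : d0 ≤ d1)
    (hα0 : α0 ∈ Icc d0 d1) (hα : α ∈ Icc d0 d1)
    (ht0 : t0 ∈ Ici (1:ℝ)) (hmin : ∀ t ∈ Ici (1:ℝ), h c0 t0 ≤ h c0 t)
    (hv : h c0 ((t0 ^ (1 / d0)) ^ d1) ≤ v) (hvu : v < u)
    (μ : Measure ℝ) [IsProbabilityMeasure μ]
    (hcdf : ∀ x ≥ t0 ^ (1 / d0), μ (Iic x) = ENNReal.ofReal (1 - Real.exp (-c0 * x ^ α0)))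
    (hcdf0 : ∀ x < t0 ^ (1 / d0), μ (Iic x) = 0) :
    ∫ y, trunc v u (h c0 (y ^ α)) ∂μ
      = v + ∫ t in v..u, Real.exp (-c0 * (hstarInv c0 t0 t) ^ (α0 / α)) :=
  stmt13_general c0 d0 d1 α0 α v u t0 hc0 hd0 hdd hα ht0 hmin hv hvu μ hcdf hcdf0
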